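/- arXiv:2307.13474 — 2 statements merged into one kernel-verified Lean document; each statement's English description precedes it below -/
import Mathlib

section
/- (Theorem 2 achievability scheme) Fix a prime power q and K ≥ 2. Let W_1,…,W_K be F_q-valued random variables with arbitrary joint distribution and let N_1,…,N_K be i.i.d. uniform on F_q, with (N_1,…,N_K) independent of (W_1,…,W_K). Define Z_Σ = Z_k = (N_1,…,N_K) for every k, X_k = W_k + N_k, and, for every subset U ⊆ [K] and k ∈ U, Y_k^U = Σ_{u∈U} X_u. Then: (dropout correctness) Σ_{u∈U} W_u is a deterministic function of (Y_k^U, W_k, Z_k) for every U and k ∈ U; (server security) I(W_1,…,W_K ; X_1,…,X_K) = 0; (dropout user security) I(W_1,…,W_K ; Y_k^U | Σ_{u∈U} W_u, W_k, Z_k) = 0 for every U and k ∈ U. This protocol has L = 1, L_X = L_Y = 1, and each key Z_k as well as Z_Σ consists of K symbols of F_q, achieving the rate tuple (R_X, R_Y, R_Z, R_{Z_Σ}) = (1, 1, K, K). -/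
open Classical
open scoped BigOperators

/-- Probability of the event `E` under the probability mass function `p`
on a finite sample space `Ω`. -/
noncomputable def pr {Ω : Type*} [Fintype Ω] (p : Ω → ℝ) (E : Ω → Prop) : ℝ :=
  ∑ ω, if E ω then p ω else 0

/-- Shannon entropy of the random variable `X` in base-`q` units. -/
noncomputable def ent {Ω α : Type*} [Fintype Ω] [Fintype α] (q : ℕ) (p : Ω → ℝ)
    (X : Ω → α) : ℝ :=
  -∑ a, pr p (fun ω => X ω = a) * Real.logb q (pr p (fun ω => X ω = a))

/-- Conditional entropy `H(X | Y) = H(X, Y) − H(Y)`, base `q`. -/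
noncomputable def condEnt {Ω α β : Type*} [Fintype Ω] [Fintype α] [Fintype β]
    (q : ℕ) (p : Ω → ℝ) (X : Ω → α) (Y : Ω → β) : ℝ :=
  ent q p (fun ω => (X ω, Y ω)) - ent q p Y

/-- Mutual information `I(X ; Y) = H(X) + H(Y) − H(X, Y)`, base `q`. -/
noncomputable def mutInf {Ω α β : Type*} [Fintype Ω] [Fintype α] [Fintype β]
    (q : ℕ) (p : Ω → ℝ) (X : Ω → α) (Y : Ω → β) : ℝ :=
  ent q p X + ent q p Y - ent q p (fun ω => (X ω, Y ω))

/-- Conditional mutual information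
`I(X ; Y | Z) = H(X, Z) + H(Y, Z) − H(X, Y, Z) − H(Z)`, base `q`. -/
noncomputable def condMutInf {Ω α β γ : Type*} [Fintype Ω] [Fintype α] [Fintype β] [Fintype γ]
    (q : ℕ) (p : Ω → ℝ) (X : Ω → α) (Y : Ω → β) (Z : Ω → γ) : ℝ :=
  ent q p (fun ω => (X ω, Z ω)) + ent q p (fun ω => (Y ω, Z ω))
    - ent q p (fun ω => (X ω, Y ω, Z ω)) - ent q p Z

/-!
Every key `Z_k` contains all the masks `N_u`, so `Σ_{u∈U} W_u = Y_k^U - Σ_{u∈U} N_u` gives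
correctness, and `Y_k^U = Σ_{u∈U} W_u + Σ_{u∈U} N_u` is a function of the conditioning variables
`(Σ_{u∈U} W_u, W_k, Z_k)`, so the conditional mutual information of dropout user security vanishes.
Server security is the one-time pad: for each fixed value `w` of `W`, the shift `n ↦ w + n` is a
bijection of `F^K`, so `X = W + N` is uniform and independent of `W`.
-/

section Probability

variable {Ω α : Type*} [Fintype Ω] (p : Ω → ℝ)

lemma pr_congr {E E' : Ω → Prop} (h : ∀ ω, E ω ↔ E' ω) : pr p E = pr p E' := by
  unfold pr
  exact Finset.sum_congr rfl fun ω _ => by simp only [h ω]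

lemma pr_eq_zero_of_forall_not {E : Ω → Prop} (h : ∀ ω, ¬ E ω) : pr p E = 0 := by
  unfold pr
  exact Finset.sum_eq_zero fun ω _ => if_neg (h ω)

lemma pr_eq_sum_pr_and [Fintype α] (E : Ω → Prop) (X : Ω → α) :
    pr p E = ∑ a, pr p (fun ω => E ω ∧ X ω = a) := by
  unfold pr
  rw [Finset.sum_comm]
  refine Finset.sum_congr rfl fun ω _ => ?_
  by_cases h : E ω <;> simp [h]

lemma sum_pr_eq_one [Fintype α] (hp1 : ∑ ω, p ω = 1) (X : Ω → α) :
    ∑ a, pr p (fun ω => X ω = a) = 1 := by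
  simpa [pr, hp1] using (pr_eq_sum_pr_and p (fun _ => True) X).symm

end Probability

section Entropy

variable {Ω α β γ : Type*} [Fintype Ω] [Fintype α] [Fintype β] [Fintype γ] (q : ℕ) (p : Ω → ℝ)

lemma ent_comp_of_injective (X : Ω → α) {f : α → β} (hf : Function.Injective f) :
    ent q p (fun ω => f (X ω)) = ent q p X := by
  set G : β → ℝ := fun b =>
    pr p (fun ω => f (X ω) = b) * Real.logb q (pr p (fun ω => f (X ω) = b))
  have hpr : ∀ a, pr p (fun ω => X ω = a) = pr p (fun ω => f (X ω) = f a) := fun a =>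
    pr_congr p fun ω => hf.eq_iff.symm
  have hG : ∀ b ∉ Finset.univ.image f, G b = 0 := fun b hb => by
    have : pr p (fun ω => f (X ω) = b) = 0 :=
      pr_eq_zero_of_forall_not p fun ω h => hb (Finset.mem_image.2 ⟨X ω, Finset.mem_univ _, h⟩)
    simp only [G, this, zero_mul]
  unfold ent
  congr 1
  calc ∑ b, G b = ∑ b ∈ Finset.univ.image f, G b :=
        (Finset.sum_subset (Finset.subset_univ _) fun b _ hb => hG b hb).symm
    _ = ∑ a, G (f a) := Finset.sum_image fun a _ a' _ h => hf h
    _ = _ := by simp only [G, hpr]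

lemma ent_pair_of_indep (hp1 : ∑ ω, p ω = 1) (X : Ω → α) (Y : Ω → β)
    (hXY : ∀ a b, pr p (fun ω => X ω = a ∧ Y ω = b)
      = pr p (fun ω => X ω = a) * pr p (fun ω => Y ω = b)) :
    ent q p (fun ω => (X ω, Y ω)) = ent q p X + ent q p Y := by
  set P : α → ℝ := fun a => pr p (fun ω => X ω = a)
  set Q : β → ℝ := fun b => pr p (fun ω => Y ω = b)
  have hjoint : ∀ c : α × β, pr p (fun ω => (X ω, Y ω) = c) = P c.1 * Q c.2 := fun c =>
    (pr_congr p fun ω => Prod.ext_iff).trans (hXY c.1 c.2)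
  have hlog : ∀ a b, P a * Q b * Real.logb q (P a * Q b)
      = Q b * (P a * Real.logb q (P a)) + P a * (Q b * Real.logb q (Q b)) := by
    intro a b
    by_cases ha : P a = 0
    · simp [ha]
    by_cases hb : Q b = 0
    · simp [hb]
    rw [Real.logb_mul ha hb]
    ring
  unfold ent
  have hP : ∑ a, P a = 1 := sum_pr_eq_one p hp1 X
  have hQ : ∑ b, Q b = 1 := sum_pr_eq_one p hp1 Y
  simp_rw [hjoint, Fintype.sum_prod_type, hlog, Finset.sum_add_distrib, ← Finset.mul_sum,
    ← Finset.sum_mul, hP, hQ, one_mul]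
  exact neg_add _ _

lemma mutInf_eq_zero_of_indep (hp1 : ∑ ω, p ω = 1) (X : Ω → α) (Y : Ω → β)
    (hXY : ∀ a b, pr p (fun ω => X ω = a ∧ Y ω = b)
      = pr p (fun ω => X ω = a) * pr p (fun ω => Y ω = b)) :
    mutInf q p X Y = 0 := by
  rw [mutInf, ent_pair_of_indep q p hp1 X Y hXY]
  ring

lemma condMutInf_eq_zero_of_eq_comp (X : Ω → α) (Y : Ω → β) (Z : Ω → γ) (g : γ → β)
    (hY : ∀ ω, Y ω = g (Z ω)) :
    condMutInf q p X Y Z = 0 := by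
  obtain rfl : Y = fun ω => g (Z ω) := funext hY
  have hYZ : ent q p (fun ω => (g (Z ω), Z ω)) = ent q p Z :=
    ent_comp_of_injective q p Z (f := fun c => (g c, c)) fun _ _ h => congrArg Prod.snd h
  have hXYZ : ent q p (fun ω => (X ω, g (Z ω), Z ω)) = ent q p (fun ω => (X ω, Z ω)) :=
    ent_comp_of_injective q p (fun ω => (X ω, Z ω)) (f := fun c => (c.1, g c.2, c.2))
      fun _ _ h => Prod.ext (congrArg Prod.fst h :) (congrArg (Prod.snd ∘ Prod.snd) h :)
  rw [condMutInf, hYZ, hXYZ]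
  ring

end Entropy

section OneTimePad

variable {Ω G : Type*} [Fintype Ω] [AddGroup G] (p : Ω → ℝ) (W N : Ω → G) (c : ℝ)

lemma pr_and_add_eq_of_indep_uniform
    (hWN : ∀ w n, pr p (fun ω => W ω = w ∧ N ω = n) = pr p (fun ω => W ω = w) * c) (w x : G) :
    pr p (fun ω => W ω = w ∧ W ω + N ω = x) = pr p (fun ω => W ω = w) * c := by
  rw [← hWN w (-w + x)]
  refine pr_congr p fun ω => and_congr_right fun hw => ?_
  rw [hw, eq_neg_add_iff_add_eq]

lemma pr_add_eq_of_indep_uniform [Fintype G] (hp1 : ∑ ω, p ω = 1)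
    (hWN : ∀ w n, pr p (fun ω => W ω = w ∧ N ω = n) = pr p (fun ω => W ω = w) * c) (x : G) :
    pr p (fun ω => W ω + N ω = x) = c := by
  have hsplit : ∀ w, pr p (fun ω => W ω + N ω = x ∧ W ω = w) = pr p (fun ω => W ω = w) * c :=
    fun w => (pr_congr p fun ω => and_comm).trans (pr_and_add_eq_of_indep_uniform p W N c hWN w x)
  rw [pr_eq_sum_pr_and p _ W, Finset.sum_congr rfl fun w _ => hsplit w, ← Finset.sum_mul,
    sum_pr_eq_one p hp1, one_mul]

lemma mutInf_add_eq_zero_of_indep_uniform [Fintype G] (q : ℕ) (hp1 : ∑ ω, p ω = 1)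
    (hWN : ∀ w n, pr p (fun ω => W ω = w ∧ N ω = n) = pr p (fun ω => W ω = w) * c) :
    mutInf q p W (fun ω => W ω + N ω) = 0 :=
  mutInf_eq_zero_of_indep q p hp1 _ _ fun w x => by
    rw [pr_and_add_eq_of_indep_uniform p W N c hWN, pr_add_eq_of_indep_uniform p W N c hp1 hWN]

end OneTimePad

theorem theorem2_achievability_scheme_general
    (F : Type) [Field F] [Fintype F]
    (K : ℕ)
    (Ω : Type) [Fintype Ω] (p : Ω → ℝ)
    (hp1 : (∑ ω, p ω) = 1)
    (W N : Fin K → Ω → F)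
    -- (N_1, …, N_K) i.i.d. uniform on F and independent of (W_1, …, W_K)
    (hWN : ∀ (w n : Fin K → F),
      pr p (fun ω => (∀ k, W k ω = w k) ∧ (∀ k, N k ω = n k))
        = pr p (fun ω => ∀ k, W k ω = w k) * (1 / (Fintype.card F : ℝ)) ^ K) :
    -- dropout correctness: Σ_{u ∈ U} W_u is a deterministic function of (Y_k^U, W_k, Z_k)
    (∀ (U : Finset (Fin K)), ∀ k ∈ U, ∃ d : F → F → (Fin K → F) → F, ∀ ω,
      (∑ u ∈ U, W u ω)
        = d (∑ u ∈ U, (W u ω + N u ω)) (W k ω) (fun u => N u ω)) ∧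
    -- server security: I(W_1, …, W_K ; X_1, …, X_K) = 0
    (mutInf (Fintype.card F) p (fun ω => fun k => W k ω)
        (fun ω => fun k => W k ω + N k ω) = 0) ∧
    -- dropout user security: I(W_1, …, W_K ; Y_k^U | Σ_{u ∈ U} W_u, W_k, Z_k) = 0
    (∀ (U : Finset (Fin K)), ∀ k ∈ U,
      condMutInf (Fintype.card F) p (fun ω => fun u => W u ω)
        (fun ω => ∑ u ∈ U, (W u ω + N u ω))
        (fun ω => (∑ u ∈ U, W u ω, W k ω, fun u => N u ω)) = 0) := by
  have hWN_vec : ∀ w n : Fin K → F,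
      pr p (fun ω => (fun k => W k ω) = w ∧ (fun k => N k ω) = n)
        = pr p (fun ω => (fun k => W k ω) = w) * (1 / (Fintype.card F : ℝ)) ^ K := by
    simpa only [funext_iff] using hWN
  refine ⟨fun U _ _ => ⟨fun y _ n => y - ∑ u ∈ U, n u, fun ω => ?_⟩,
    mutInf_add_eq_zero_of_indep_uniform p _ _ _ _ hp1 hWN_vec, fun U _ _ => ?_⟩
  · simp only [Finset.sum_add_distrib, add_sub_cancel_right]
  · exact condMutInf_eq_zero_of_eq_comp _ p _ _ _ (fun c => c.1 + ∑ u ∈ U, c.2.2 u)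
      fun ω => Finset.sum_add_distrib

/-- **Theorem 2 achievability scheme.** With arbitrary inputs `W_k ∈ F` and
`N_1, …, N_K` i.i.d. uniform on `F` independent of the inputs, the scheme
`Z_Σ = Z_k = (N_1, …, N_K)`, `X_k = W_k + N_k`, `Y_k^U = Σ_{u ∈ U} X_u`
satisfies dropout correctness, server security and dropout user security,
achieving `(R_X, R_Y, R_Z, R_{Z_Σ}) = (1, 1, K, K)` (here `L = 1`,
`L_X = L_Y = 1`, `Z_k = Z_Σ ∈ F^K`). -/
theorem theorem2_achievability_scheme
    (F : Type) [Field F] [Fintype F]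
    (K : ℕ) (hK : 2 ≤ K)
    (Ω : Type) [Fintype Ω] (p : Ω → ℝ)
    (hp0 : ∀ ω, 0 ≤ p ω) (hp1 : (∑ ω, p ω) = 1)
    (W N : Fin K → Ω → F)
    -- (N_1, …, N_K) i.i.d. uniform on F and independent of (W_1, …, W_K)
    (hWN : ∀ (w n : Fin K → F),
      pr p (fun ω => (∀ k, W k ω = w k) ∧ (∀ k, N k ω = n k))
        = pr p (fun ω => ∀ k, W k ω = w k) * (1 / (Fintype.card F : ℝ)) ^ K) :
    -- dropout correctness: Σ_{u ∈ U} W_u is a deterministic function of (Y_k^U, W_k, Z_k)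
    (∀ (U : Finset (Fin K)), ∀ k ∈ U, ∃ d : F → F → (Fin K → F) → F, ∀ ω,
      (∑ u ∈ U, W u ω)
        = d (∑ u ∈ U, (W u ω + N u ω)) (W k ω) (fun u => N u ω)) ∧
    -- server security: I(W_1, …, W_K ; X_1, …, X_K) = 0
    (mutInf (Fintype.card F) p (fun ω => fun k => W k ω)
        (fun ω => fun k => W k ω + N k ω) = 0) ∧
    -- dropout user security: I(W_1, …, W_K ; Y_k^U | Σ_{u ∈ U} W_u, W_k, Z_k) = 0
    (∀ (U : Finset (Fin K)), ∀ k ∈ U,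
      condMutInf (Fintype.card F) p (fun ω => fun u => W u ω)
        (fun ω => ∑ u ∈ U, (W u ω + N u ω))
        (fun ω => (∑ u ∈ U, W u ω, W k ω, fun u => N u ω)) = 0) :=
  theorem2_achievability_scheme_general F K Ω p hp1 W N hWN
end

section
/- (Collusion in the dropout model) In the secure aggregation with an oblivious server and user dropouts model, assuming dropout correctness, if the server colludes with user 1 then all inputs are revealed: H(W_1, …, W_K | X_1, …, X_K, W_1, Z_1) = 0, i.e., the full input tuple (W_1,…,W_K) is almost surely a deterministic function of the first-phase messages (X_1,…,X_K) together with W_1 and Z_1. -/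
/-!
Conditional entropy vanishes exactly when the conditioned variable is a function of the
conditioning one on the support of `p`. Given the colluding view `(X, W₁, Z₁)` and any
`k ≠ 1`, the server's reply to user 1 for the surviving set `U = {1, k}` is a function of `X`,
so dropout correctness pins down `W₁ + W_k`, hence `W_k`.
-/

open Classical
open scoped BigOperators

lemma mul_logb_sub_logb_nonneg {b s t : ℝ} (hb : 1 < b) (ht : 0 ≤ t) (hts : t ≤ s) :
    0 ≤ t * (Real.logb b s - Real.logb b t) := by
  rcases ht.eq_or_lt with rfl | ht
  · simp
  · exact mul_nonneg ht.le (sub_nonneg.2 (Real.logb_le_logb_of_le hb ht hts))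

lemma mul_logb_sub_logb_eq_zero_iff {b s t : ℝ} (hb : 1 < b) (ht : 0 ≤ t) (hts : t ≤ s) :
    t * (Real.logb b s - Real.logb b t) = 0 ↔ (0 < t → t = s) := by
  rcases ht.eq_or_lt with rfl | ht
  · simp
  · rw [mul_eq_zero, sub_eq_zero]
    simp only [ht.ne', false_or, ht, true_implies]
    exact ⟨fun h => (Real.logb_injOn_pos hb ht (ht.trans_le hts) h.symm), fun h => h ▸ rfl⟩

section FiniteProbability

variable {Ω α β : Type*} [Fintype Ω] {p : Ω → ℝ}

lemma pr_nonneg (hp0 : ∀ ω, 0 ≤ p ω) (E : Ω → Prop) : 0 ≤ pr p E :=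
  Finset.sum_nonneg fun ω _ => by split_ifs <;> simp [hp0 ω]

lemma pr_mono (hp0 : ∀ ω, 0 ≤ p ω) {E G : Ω → Prop} (h : ∀ ω, E ω → G ω) :
    pr p E ≤ pr p G :=
  Finset.sum_le_sum fun ω _ => by
    by_cases hE : E ω
    · simp [hE, h ω hE]
    · by_cases hG : G ω <;> simp [hE, hG, hp0 ω]

lemma pr_pos_iff (hp0 : ∀ ω, 0 ≤ p ω) {E : Ω → Prop} :
    0 < pr p E ↔ ∃ ω, 0 < p ω ∧ E ω := by
  unfold pr
  rw [Finset.sum_pos_iff_of_nonneg fun ω _ => by split_ifs <;> simp [hp0 ω]]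
  refine exists_congr fun ω => ?_
  by_cases hE : E ω <;> simp [hE]

lemma pr_eq_pr_iff_of_imp (hp0 : ∀ ω, 0 ≤ p ω) {E G : Ω → Prop}
    (h : ∀ ω, E ω → G ω) : pr p E = pr p G ↔ ∀ ω, 0 < p ω → G ω → E ω := by
  have hdiff : pr p G - pr p E = ∑ ω, if G ω ∧ ¬E ω then p ω else 0 := by
    unfold pr
    rw [← Finset.sum_sub_distrib]
    refine Finset.sum_congr rfl fun ω _ => ?_
    by_cases hE : E ω
    · simp [hE, h ω hE]
    · by_cases hG : G ω <;> simp [hE, hG]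
  rw [eq_comm, ← sub_eq_zero, hdiff,
    Fintype.sum_eq_zero_iff_of_nonneg fun ω => by split_ifs <;> simp [hp0 ω], funext_iff]
  refine forall_congr' fun ω => ?_
  by_cases hE : E ω <;> by_cases hG : G ω <;> simp [hE, hG, (hp0 ω).lt_iff_ne']

lemma sum_pr_pair_eq [Fintype α] (X : Ω → α) (Y : Ω → β) (b : β) :
    ∑ a, pr p (fun ω => (X ω, Y ω) = (a, b)) = pr p (fun ω => Y ω = b) := by
  unfold pr
  rw [Finset.sum_comm]
  refine Finset.sum_congr rfl fun ω _ => ?_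
  by_cases hY : Y ω = b <;> simp [hY]

lemma condEnt_eq_sum [Fintype α] [Fintype β] (q : ℕ) (X : Ω → α) (Y : Ω → β) :
    condEnt q p X Y = ∑ c : α × β, pr p (fun ω => (X ω, Y ω) = c) *
      (Real.logb q (pr p (fun ω => Y ω = c.2)) -
        Real.logb q (pr p (fun ω => (X ω, Y ω) = c))) := by
  have hmarginal :
      ∑ c : α × β, pr p (fun ω => (X ω, Y ω) = c) *
          Real.logb q (pr p (fun ω => Y ω = c.2)) =
        ∑ b, pr p (fun ω => Y ω = b) * Real.logb q (pr p (fun ω => Y ω = b)) := by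
    rw [Fintype.sum_prod_type, Finset.sum_comm]
    simp only [← Finset.sum_mul, sum_pr_pair_eq]
  unfold condEnt ent
  simp only [mul_sub, Finset.sum_sub_distrib, hmarginal]
  ring

def IsDeterminedBy (p : Ω → ℝ) (X : Ω → α) (Y : Ω → β) : Prop :=
  ∀ ω ω', 0 < p ω → 0 < p ω' → Y ω = Y ω' → X ω = X ω'

theorem condEnt_eq_zero_iff_isDeterminedBy [Fintype α] [Fintype β] {q : ℕ} (hq : 1 < q)
    (hp0 : ∀ ω, 0 ≤ p ω) (X : Ω → α) (Y : Ω → β) :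
    condEnt q p X Y = 0 ↔ IsDeterminedBy p X Y := by
  have hq' : (1 : ℝ) < q := by exact_mod_cast hq
  have hle (c : α × β) : pr p (fun ω => (X ω, Y ω) = c) ≤ pr p (fun ω => Y ω = c.2) :=
    pr_mono hp0 fun ω h => congrArg Prod.snd h
  rw [condEnt_eq_sum, Fintype.sum_eq_zero_iff_of_nonneg
    fun c => mul_logb_sub_logb_nonneg hq' (pr_nonneg hp0 _) (hle c), funext_iff]
  simp only [Pi.zero_apply, mul_logb_sub_logb_eq_zero_iff hq' (pr_nonneg hp0 _) (hle _),
    pr_pos_iff hp0, pr_eq_pr_iff_of_imp hp0 fun ω h => congrArg Prod.snd h]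
  constructor
  · intro h ω ω' hω hω' hY
    exact congrArg Prod.fst (h (X ω', Y ω') ⟨ω', hω', rfl⟩ ω hω hY)
  · rintro h c ⟨ω, hω, rfl⟩ ω' hω' hY
    exact Prod.ext (h ω' ω hω' hω hY) hY

end FiniteProbability

/-- **Collusion in the dropout model.** Assuming dropout correctness, if the server
colludes with user 1 then all inputs are revealed:
`H(W_1, …, W_K | X_1, …, X_K, W_1, Z_1) = 0`, i.e. the full input tuple is almost
surely a deterministic function of `(X_1, …, X_K, W_1, Z_1)`. -/
theorem collusion_dropout_model
    (F : Type) [Field F] [Fintype F]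
    (K L LX LY : ℕ) (hK : 2 ≤ K)
    (Ω : Type) [Fintype Ω] (p : Ω → ℝ)
    (hp0 : ∀ ω, 0 ≤ p ω)
    (ZT : Fin K → Type) [∀ k, Fintype (ZT k)]
    (W : Fin K → Ω → Fin L → F)
    (Z : (k : Fin K) → Ω → ZT k)
    (X : Fin K → Ω → Fin LX → F)
    (Y : Finset (Fin K) → Fin K → Ω → Fin LY → F)
    -- deterministic server maps Y_k^U = ψ_k^U((X_u)_{u ∈ U})
    (hY : ∀ (U : Finset (Fin K)), ∀ k ∈ U,
      ∃ ψ : ((u : {u : Fin K // u ∈ U}) → Fin LX → F) → Fin LY → F,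
        ∀ ω, Y U k ω = ψ (fun u => X u.1 ω))
    -- dropout correctness: H(Σ_{u ∈ U} W_u | Y_k^U, W_k, Z_k) = 0
    (hCorr : ∀ (U : Finset (Fin K)), ∀ k ∈ U,
      condEnt (Fintype.card F) p (fun ω => ∑ u ∈ U, W u ω)
        (fun ω => (Y U k ω, W k ω, Z k ω)) = 0) :
    condEnt (Fintype.card F) p (fun ω => fun k => W k ω)
      (fun ω => (fun k => X k ω, W ⟨0, by omega⟩ ω, Z ⟨0, by omega⟩ ω)) = 0 := by
  have hq : 1 < Fintype.card F := Fintype.one_lt_card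
  set k₀ : Fin K := ⟨0, by omega⟩
  rw [condEnt_eq_zero_iff_isDeterminedBy hq hp0]
  rintro ω ω' hω hω' hview
  simp only [Prod.mk.injEq] at hview
  obtain ⟨hX, hW₀, hZ₀⟩ := hview
  funext k
  show W k ω = W k ω'
  by_cases hk : k = k₀
  · exact hk ▸ hW₀
  have hY₀ : Y {k₀, k} k₀ ω = Y {k₀, k} k₀ ω' := by
    obtain ⟨ψ, hψ⟩ := hY {k₀, k} k₀ (by simp)
    rw [hψ, hψ]
    exact congrArg ψ (funext fun u => congrFun hX u)
  have hsum := (condEnt_eq_zero_iff_isDeterminedBy hq hp0 _ _).1 (hCorr {k₀, k} k₀ (by simp))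
    ω ω' hω hω' (by rw [hY₀, hW₀, hZ₀])
  rw [Finset.sum_pair (Ne.symm hk), Finset.sum_pair (Ne.symm hk), hW₀] at hsum
  exact add_left_cancel hsum
end
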